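/- arXiv:1001.4381 — 2 statements merged into one kernel-verified Lean document; each statement's English description precedes it below -/
import Mathlib

section
/- Let R be an orthogonal TRS. If t →* t', then there exists a term t̂ such that t rewrites to t̂ by a sequence of outermost steps and t̂ rewrites to t' by a sequence of non-outermost steps. In other words, any finite reduction can be rearranged into an outermost phase followed by a non-outermost phase. -/
/-- First-order terms over a signature `F` with natural-number variables. -/
inductive Trm (F : Type) : Type
  | var : ℕ → Trm F
  | app : F → List (Trm F) → Trm F

namespace Trm

variable {F : Type}

/-- Application of a substitution to a term. -/
def subst (σ : ℕ → Trm F) : Trm F → Trm F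
  | var n => σ n
  | app f ts => app f (ts.attach.map fun x => subst σ x.1)
decreasing_by have := List.sizeOf_lt_of_mem x.2; simp; omega

/-- The list of variables occurring in a term. -/
def varList : Trm F → List ℕ
  | var n => [n]
  | app _ ts => ts.attach.flatMap fun x => varList x.1
decreasing_by have := List.sizeOf_lt_of_mem x.2; simp; omega

/-- A term is ground if it contains no variables. -/
def Ground (t : Trm F) : Prop := varList t = []

/-- The subterm at a position (a list of argument indices), if it exists. -/
def subtermAt : Trm F → List ℕ → Option (Trm F)
  | t, [] => some t
  | var _, _ :: _ => none
  | app _ ts, i :: p => (ts[i]?).bind fun t => subtermAt t p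

/-- Replacement of the subterm at a position by another term, if the position exists. -/
def replaceAt : Trm F → List ℕ → Trm F → Option (Trm F)
  | _, [], s => some s
  | var _, _ :: _, _ => none
  | app f ts, i :: p, s =>
      (ts[i]?).bind fun t => (replaceAt t p s).map fun t' => app f (ts.set i t')

def IsVar : Trm F → Prop
  | var _ => True
  | app _ _ => False

end Trm

open Trm

variable {F : Type}

/-- A rewrite rule is a pair (lhs, rhs). -/
abbrev Rule (F : Type) := Trm F × Trm F

/-- A term is a redex w.r.t. a TRS `R` if it is an instance of a left-hand side. -/
def IsRedex (R : Set (Rule F)) (t : Trm F) : Prop :=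
  ∃ (l r : Trm F) (σ : ℕ → Trm F), (l, r) ∈ R ∧ t = subst σ l

/-- `t` has a redex at position `p`. -/
def HasRedexAt (R : Set (Rule F)) (t : Trm F) (p : List ℕ) : Prop :=
  ∃ s, subtermAt t p = some s ∧ IsRedex R s

/-- A rewrite step of `R` at position `p`. -/
def RewriteAt (R : Set (Rule F)) (t t' : Trm F) (p : List ℕ) : Prop :=
  ∃ (l r : Trm F) (σ : ℕ → Trm F), (l, r) ∈ R ∧
    subtermAt t p = some (subst σ l) ∧ replaceAt t p (subst σ r) = some t'

/-- A rewrite step of `R` (at some position). -/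
def Rewrite (R : Set (Rule F)) (t t' : Trm F) : Prop := ∃ p, RewriteAt R t t' p

/-- Many-step rewriting. -/
abbrev RewriteStar (R : Set (Rule F)) : Trm F → Trm F → Prop :=
  Relation.ReflTransGen (Rewrite R)

/-- `p` is a strict (proper) prefix of `q`, i.e. position `p` is strictly above `q`. -/
def StrictPref (p q : List ℕ) : Prop := p <+: q ∧ p ≠ q

/-- Two positions are independent (parallel) if neither is a prefix of the other. -/
def Indep (p q : List ℕ) : Prop := ¬ p <+: q ∧ ¬ q <+: p

/-- An outermost rewrite step at position `p`: no redex strictly above `p`. -/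
def OutStepAt (R : Set (Rule F)) (t t' : Trm F) (p : List ℕ) : Prop :=
  RewriteAt R t t' p ∧ ∀ q, StrictPref q p → ¬ HasRedexAt R t q

def OutStep (R : Set (Rule F)) (t t' : Trm F) : Prop := ∃ p, OutStepAt R t t' p

/-- A non-outermost rewrite step at position `p`: some redex strictly above `p`. -/
def NonOutStepAt (R : Set (Rule F)) (t t' : Trm F) (p : List ℕ) : Prop :=
  RewriteAt R t t' p ∧ ∃ q, StrictPref q p ∧ HasRedexAt R t q

def NonOutStep (R : Set (Rule F)) (t t' : Trm F) : Prop := ∃ p, NonOutStepAt R t t' p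

/-- A sequence of rewrite steps at the listed positions. -/
inductive StepsAt (R : Set (Rule F)) : Trm F → Trm F → List (List ℕ) → Prop
  | nil (t) : StepsAt R t t []
  | cons {t t' t'' p ps} : RewriteAt R t t' p → StepsAt R t' t'' ps →
      StepsAt R t t'' (p :: ps)

/-- A parallel rewrite step: contraction of redexes at pairwise independent positions. -/
def ParStep (R : Set (Rule F)) (t t' : Trm F) : Prop :=
  ∃ ps : List (List ℕ), ps.Pairwise Indep ∧ StepsAt R t t' ps

/-- A parallel step all of whose contracted positions are non-outermost in the source,
i.e. each contracted redex lies strictly below another redex. -/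
def ParNonOut (R : Set (Rule F)) (t t' : Trm F) : Prop :=
  ∃ ps : List (List ℕ), ps.Pairwise Indep ∧
    (∀ p ∈ ps, ∃ q, StrictPref q p ∧ HasRedexAt R t q) ∧ StepsAt R t t' ps

/-- Left-linearity: no variable occurs twice in a left-hand side. -/
def LeftLinear (R : Set (Rule F)) : Prop := ∀ l r, (l, r) ∈ R → (varList l).Nodup

/-- Non-overlapping: the only overlaps between left-hand sides are trivial root
overlaps of a rule with itself. -/
def NonOverlapping (R : Set (Rule F)) : Prop :=
  ∀ l₁ r₁ l₂ r₂, (l₁, r₁) ∈ R → (l₂, r₂) ∈ R →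
    ∀ p s, subtermAt l₁ p = some s → ¬ IsVar s →
      ∀ (σ τ : ℕ → Trm F), subst σ s = subst τ l₂ →
        p = [] ∧ l₁ = l₂ ∧ r₁ = r₂

/-- Orthogonality: left-linear and non-overlapping. -/
def Orthogonal (R : Set (Rule F)) : Prop := LeftLinear R ∧ NonOverlapping R

/-- A symbol `c` is a constructor of `R` if no left-hand side has root `c`. -/
def IsConstructor (R : Set (Rule F)) (c : F) : Prop :=
  ∀ l r, (l, r) ∈ R → ∀ ts, l ≠ app c ts

/-- An infinite outermost reduction (with its sequence of contracted positions). -/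
def InfOutRed (R : Set (Rule F)) (ts : ℕ → Trm F) (ps : ℕ → List ℕ) : Prop :=
  ∀ i, OutStepAt R (ts i) (ts (i + 1)) (ps i)

/-- Balancedness: every redex is eventually reduced or consumed by a step at or
above its position. -/
def BalancedRed (R : Set (Rule F)) (ts : ℕ → Trm F) (ps : ℕ → List ℕ) : Prop :=
  ∀ i q, HasRedexAt R (ts i) q → ∃ j, i ≤ j ∧ ps j <+: q

/-- BalancedRed outermost termination: no infinite balanced outermost reduction. -/
def BalOutTerminating (R : Set (Rule F)) : Prop :=
  ¬ ∃ (ts : ℕ → Trm F) (ps : ℕ → List ℕ), InfOutRed R ts ps ∧ BalancedRed R ts ps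

/-- Outermost termination: no infinite outermost reduction. -/
def OutTerminating (R : Set (Rule F)) : Prop :=
  ¬ ∃ (ts : ℕ → Trm F) (ps : ℕ → List ℕ), InfOutRed R ts ps

/-- A term with the stream constructor ':' (here `c`) at the root. -/
def ConsRooted (c : F) (t : Trm F) : Prop := ∃ u t', t = app c [u, t']

/-- `ConsTower c n t` says `t = u₁ : u₂ : ⋯ : uₙ : t'`. -/
def ConsTower (c : F) : ℕ → Trm F → Prop
  | 0, _ => True
  | n + 1, t => ∃ u t', t = app c [u, t'] ∧ ConsTower c n t'

/-- Productivity of a term: it produces arbitrarily many ':'-elements. -/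
def Productive (R : Set (Rule F)) (c : F) (t : Trm F) : Prop :=
  ∀ n, ∃ t', RewriteStar R t t' ∧ ConsTower c n t'

/-- Well-sortedness of terms, with sorts `Bool` (`false` = data, `true` = stream),
argument/result sorts given by `ar` and variable sorts by `vs`. -/
inductive WS (ar : F → List Bool × Bool) (vs : ℕ → Bool) : Trm F → Bool → Prop
  | var (n) : WS ar vs (var n) (vs n)
  | app (f) (ts : List (Trm F)) : ts.length = (ar f).1.length →
      (∀ (i : ℕ) t b, ts[i]? = some t → (ar f).1[i]? = some b → WS ar vs t b) →
      WS ar vs (app f ts) (ar f).2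

/-- All function symbols of a term belong to the set `S`. -/
inductive SymOver (S : Set F) : Trm F → Prop
  | var (n) : SymOver S (var n)
  | app (f) (ts : List (Trm F)) : f ∈ S → (∀ t ∈ ts, SymOver S t) → SymOver S (app f ts)

/-- A stream specification `(Σ_d, Σ_s, R_d, R_s)` over signature `F`. -/
structure StreamSpec (F : Type) where
  /-- argument sorts and result sort of each symbol -/
  ar : F → List Bool × Bool
  /-- sorts of variables -/
  vs : ℕ → Bool
  /-- the stream constructor ':' of type d × s → s -/
  cons : F
  cons_ar : ar cons = ([false, true], true)
  /-- the data signature Σ_d -/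
  Sd : Set F
  /-- the stream signature Σ_s -/
  Ss : Set F
  cons_not_d : cons ∉ Sd
  cons_not_s : cons ∉ Ss
  d_sorts : ∀ f ∈ Sd, (∀ b ∈ (ar f).1, b = false) ∧ (ar f).2 = false
  s_res : ∀ f ∈ Ss, (ar f).2 = true
  /-- the data rules -/
  Rd : Set (Rule F)
  /-- the stream rules -/
  Rs : Set (Rule F)
  Rd_data : ∀ rl ∈ Rd, SymOver Sd rl.1 ∧ SymOver Sd rl.2
  Rd_sorted : ∀ l r, (l, r) ∈ Rd → WS ar vs l false ∧ WS ar vs r false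
  /-- R_d is terminating -/
  Rd_term : WellFounded (fun a b : Trm F => Rewrite Rd b a)
  /-- R_d ∪ R_s is orthogonal -/
  orth : Orthogonal (Rd ∪ Rs)
  Rs_sorted : ∀ l r, (l, r) ∈ Rs → WS ar vs l true ∧ WS ar vs r true
  /-- left-hand sides of R_s have the shape f(u₁,…,uₙ,t₁,…,tₘ) with f ∈ Σ_s and
  each stream argument tᵢ a variable or of the form x : σ -/
  lhs_shape : ∀ l r, (l, r) ∈ Rs → ∃ f args, f ∈ Ss ∧ l = app f args ∧
    ∀ (i : ℕ) a, args[i]? = some a → (ar f).1[i]? = some true →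
      (∃ n, a = var n) ∨ (∃ n m, a = app cons [var n, var m])
  /-- exhaustiveness: every ground term f(u₁,…,uₙ,u_{n+1}:t₁,…) with the uᵢ data
  normal forms is a redex of R_s -/
  exhaustive : ∀ f ts, f ∈ Ss → Ground (app f ts) →
    SymOver (Sd ∪ Ss ∪ {cons}) (app f ts) → WS ar vs (app f ts) true →
    (∀ (i : ℕ) t, ts[i]? = some t →
      ((ar f).1[i]? = some false → ∀ t', ¬ Rewrite Rd t t') ∧
      ((ar f).1[i]? = some true → ∃ u t', t = app cons [u, t'])) →
    IsRedex Rs (app f ts)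

/-- A ground term of sort s over the signature of the specification. -/
def StreamSpec.GroundStream (S : StreamSpec F) (t : Trm F) : Prop :=
  Ground t ∧ SymOver (S.Sd ∪ S.Ss ∪ {S.cons}) t ∧ WS S.ar S.vs t true

/-- Productivity of the specification on all ground terms of sort s. -/
def StreamSpec.ProductiveAll (S : StreamSpec F) : Prop :=
  ∀ t, S.GroundStream t → Productive (S.Rd ∪ S.Rs) S.cons t

/-- The additional rule `x : σ → overflow`. -/
def ovRule (c ov : F) : Rule F := (app c [var 0, var 1], app ov [])

/-!
The key is a swap. Call a parallel step non-outermost if every contracted redex lies strictly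
below some other redex. If such a step `x ⇉ u` is followed by an outermost step `u → u₁` at `p`,
then by orthogonality the redexes witnessing non-outermostness survive into `u`, so no contracted
position lies above `p`, and no redex of `x` lies strictly above `p` either. The contracted
positions below `p` then sit inside the variable part of the left-linear pattern of the redex at
`p`, so that pattern is already present in `x`: contracting it first gives an outermost step
`x → x₁` followed by a parallel step `x₁ ⇉ u₁` (the residuals, plus the steps parallel to `p`).
A parallel step in turn factors as outermost steps followed by a non-outermost parallel step, by
performing its outermost steps first and postponing the others, whose witnesses persist. Hence
non-outermost parallel steps can be postponed to the end of any finite reduction, and are then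
performed one at a time as non-outermost steps.
-/

theorem Relation.ReflTransGen.postpone {α : Type*} {O P : α → α → Prop}
    (hswap : ∀ ⦃a b c⦄, P a b → O b c → ∃ d, ReflTransGen O a d ∧ P d c) {a b : α}
    (h : ReflTransGen (O ⊔ P) a b) : ∃ c, ReflTransGen O a c ∧ ReflTransGen P c b := by
  have swap_star : ∀ {a b c}, P a b → ReflTransGen O b c → ∃ d, ReflTransGen O a d ∧ P d c := by
    intro a b c hab hbc
    induction hbc using ReflTransGen.head_induction_on generalizing a with
    | refl => exact ⟨a, .refl, hab⟩
    | head hbb' _ ih =>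
        obtain ⟨d, had, hdb'⟩ := hswap hab hbb'
        obtain ⟨e, hde, hec⟩ := ih hdb'
        exact ⟨e, had.trans hde, hec⟩
  have star_swap : ∀ {a b c}, ReflTransGen P a b → O b c →
      ∃ d, ReflTransGen O a d ∧ ReflTransGen P d c := by
    intro a b c hab hbc
    induction hab using ReflTransGen.head_induction_on with
    | refl => exact ⟨c, .single hbc, .refl⟩
    | head haa' _ ih =>
        obtain ⟨d, ha'd, hdc⟩ := ih
        obtain ⟨e, hae, hed⟩ := swap_star haa' ha'd
        exact ⟨e, hae, .head hed hdc⟩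
  induction h with
  | refl => exact ⟨a, .refl, .refl⟩
  | tail _ hbc ih =>
      obtain ⟨d, had, hdb⟩ := ih
      rcases hbc with hO | hP
      · obtain ⟨e, hde, hec⟩ := star_swap hdb hO
        exact ⟨e, had.trans hde, hec⟩
      · exact ⟨d, had, hdb.tail hP⟩

theorem List.set_eq_self_of_getElem? {α : Type*} {l : List α} {i : ℕ} {a : α}
    (h : l[i]? = some a) : l.set i a = l := by
  obtain ⟨hi, rfl⟩ := List.getElem?_eq_some_iff.mp h
  exact List.set_getElem_self hi

theorem List.getElem?_set_self_of_getElem?_eq_some {α : Type*} {l : List α} {i : ℕ} {a : α}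
    (h : l[i]? = some a) (b : α) : (l.set i b)[i]? = some b :=
  List.getElem?_set_self (List.getElem?_eq_some_iff.mp h).1

theorem List.disjoint_of_nodup_flatMap {α β : Type*} {l : List α} {f : α → List β}
    (h : (l.flatMap f).Nodup) {i j : ℕ} {a b : α} (hij : i ≠ j)
    (ha : l[i]? = some a) (hb : l[j]? = some b) : (f a).Disjoint (f b) := by
  obtain ⟨hi, rfl⟩ := List.getElem?_eq_some_iff.mp ha
  obtain ⟨hj, rfl⟩ := List.getElem?_eq_some_iff.mp hb
  have hpw := List.pairwise_iff_getElem.mp (List.nodup_flatMap.mp h).2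
  rcases Nat.lt_or_gt_of_ne hij with hlt | hlt
  · exact hpw i j hi hj hlt
  · exact (hpw j i hj hi hlt).symm

theorem Indep.symm {p q : List ℕ} (h : Indep p q) : Indep q p := ⟨h.2, h.1⟩

instance : Std.Symm Indep := ⟨fun _ _ => Indep.symm⟩

theorem indep_append_iff (v : List ℕ) {p q : List ℕ} : Indep (v ++ p) (v ++ q) ↔ Indep p q := by
  simp only [Indep, List.prefix_append_right_inj]

theorem indep_cons_cons_of_ne {i j : ℕ} (hij : i ≠ j) (p q : List ℕ) :
    Indep (i :: p) (j :: q) :=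
  ⟨fun h => hij (List.cons_prefix_cons.mp h).1, fun h => hij (List.cons_prefix_cons.mp h).1.symm⟩

theorem Indep.of_prefix_left {p p' q : List ℕ} (h : Indep p q) (hp : p <+: p') : Indep p' q :=
  ⟨fun h' => h.1 (hp.trans h'), fun h' =>
    (List.prefix_or_prefix_of_prefix h' hp).elim h.2 h.1⟩

theorem StrictPref.not_prefix {p q : List ℕ} (h : StrictPref p q) : ¬ q <+: p :=
  fun h' => h.2 (h.1.eq_of_length (le_antisymm h.1.length_le h'.length_le))

theorem StrictPref.of_append {v p q : List ℕ} (h : StrictPref (v ++ p) (v ++ q)) :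
    StrictPref p q :=
  ⟨(List.prefix_append_right_inj v).mp h.1, fun hpq => h.2 (by rw [hpq])⟩

theorem strictPref_or_indep_of_not_prefix {p q : List ℕ} (h : ¬ p <+: q) :
    StrictPref q p ∨ Indep p q := by
  by_cases hqp : q <+: p
  · exact Or.inl ⟨hqp, by rintro rfl; exact h hqp⟩
  · exact Or.inr ⟨h, hqp⟩

namespace Trm

@[induction_eliminator]
theorem induction {P : Trm F → Prop} (var : ∀ n, P (.var n))
    (app : ∀ f ts, (∀ t ∈ ts, P t) → P (.app f ts)) : ∀ t, P t
  | .var n => var n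
  | .app f ts => app f ts fun t _ => induction var app t
decreasing_by have := List.sizeOf_lt_of_mem ‹t ∈ ts›; simp; omega

@[simp] theorem subst_var (σ : ℕ → Trm F) (n : ℕ) : subst σ (var n) = σ n := by
  simp [subst]

@[simp] theorem subst_app (σ : ℕ → Trm F) (f : F) (ts : List (Trm F)) :
    subst σ (app f ts) = app f (ts.map (subst σ)) := by
  rw [subst]; congr 1; exact List.attach_map_val

@[simp] theorem varList_var (n : ℕ) : varList (F := F) (var n) = [n] := by
  simp [varList]

@[simp] theorem varList_app (f : F) (ts : List (Trm F)) :
    varList (app f ts) = ts.flatMap varList := by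
  rw [varList]; simp [List.flatMap]

@[simp] theorem subtermAt_nil (t : Trm F) : subtermAt t [] = some t := by
  cases t <;> rfl

@[simp] theorem subtermAt_var_cons (n i : ℕ) (p : List ℕ) :
    subtermAt (F := F) (var n) (i :: p) = none := rfl

@[simp] theorem subtermAt_app_cons (f : F) (ts : List (Trm F)) (i : ℕ) (p : List ℕ) :
    subtermAt (app f ts) (i :: p) = ts[i]?.bind (subtermAt · p) := rfl

@[simp] theorem replaceAt_nil (t s : Trm F) : replaceAt t [] s = some s := by
  cases t <;> rfl

@[simp] theorem replaceAt_var_cons (n i : ℕ) (p : List ℕ) (s : Trm F) :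
    replaceAt (F := F) (var n) (i :: p) s = none := rfl

@[simp] theorem replaceAt_app_cons (f : F) (ts : List (Trm F)) (i : ℕ) (p : List ℕ) (s : Trm F) :
    replaceAt (app f ts) (i :: p) s =
      ts[i]?.bind fun t => (replaceAt t p s).map fun t' => app f (ts.set i t') := rfl

theorem subtermAt_app_cons_eq_some {f : F} {ts : List (Trm F)} {i : ℕ} {p : List ℕ}
    {s : Trm F} :
    subtermAt (app f ts) (i :: p) = some s ↔ ∃ a, ts[i]? = some a ∧ subtermAt a p = some s := by
  simp [Option.bind_eq_some_iff]

theorem replaceAt_app_cons_eq_some {f : F} {ts : List (Trm F)} {i : ℕ} {p : List ℕ}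
    {s t' : Trm F} :
    replaceAt (app f ts) (i :: p) s = some t' ↔
      ∃ a b, ts[i]? = some a ∧ replaceAt a p s = some b ∧ app f (ts.set i b) = t' := by
  simp [Option.bind_eq_some_iff]

theorem subtermAt_append : ∀ (t : Trm F) (p q : List ℕ),
    subtermAt t (p ++ q) = (subtermAt t p).bind (subtermAt · q)
  | _, [], _ => by simp
  | var _, _ :: _, _ => by simp
  | app f ts, i :: p, q => by
      cases hi : ts[i]? with
      | none => simp [hi]
      | some a => simp [hi, subtermAt_append a p q]

theorem exists_replaceAt_of_subtermAt (s : Trm F) : ∀ {t u : Trm F} {p : List ℕ},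
    subtermAt t p = some u → ∃ t', replaceAt t p s = some t'
  | _, _, [], _ => ⟨s, by simp⟩
  | var _, _, _ :: _, h => by simp at h
  | app f ts, _, i :: p, h => by
      obtain ⟨a, ha, hs⟩ := subtermAt_app_cons_eq_some.mp h
      obtain ⟨a', ha'⟩ := exists_replaceAt_of_subtermAt s hs
      exact ⟨_, replaceAt_app_cons_eq_some.mpr ⟨a, a', ha, ha', rfl⟩⟩

theorem subtermAt_of_replaceAt : ∀ {t s t' : Trm F} {p : List ℕ},
    replaceAt t p s = some t' → subtermAt t' p = some s
  | _, _, _, [], h => by simp_all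
  | var _, _, _, _ :: _, h => by simp at h
  | app f ts, _, _, i :: p, h => by
      obtain ⟨a, b, ha, hb, rfl⟩ := replaceAt_app_cons_eq_some.mp h
      simp [List.getElem?_set_self_of_getElem?_eq_some ha, subtermAt_of_replaceAt hb]

theorem subtermAt_of_replaceAt_of_indep : ∀ {t s t' : Trm F} {p q : List ℕ}, Indep p q →
    replaceAt t p s = some t' → subtermAt t' q = subtermAt t q
  | _, _, _, [], _, hpq, _ => absurd List.nil_prefix hpq.1
  | _, _, _, _ :: _, [], hpq, _ => absurd List.nil_prefix hpq.2
  | var _, _, _, _ :: _, _ :: _, _, h => by simp at h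
  | app f ts, _, _, i :: p, j :: q, hpq, h => by
      obtain ⟨a, b, ha, hb, rfl⟩ := replaceAt_app_cons_eq_some.mp h
      by_cases hij : i = j
      · subst hij
        simp [List.getElem?_set_self_of_getElem?_eq_some ha, ha,
          subtermAt_of_replaceAt_of_indep ((indep_append_iff [i]).mp hpq) hb]
      · simp [List.getElem?_set_ne hij]

theorem replaceAt_idem : ∀ {t a t₁ : Trm F} {p : List ℕ}, replaceAt t p a = some t₁ →
    ∀ b, replaceAt t₁ p b = replaceAt t p b
  | _, _, _, [], _, _ => by simp
  | var _, _, _, _ :: _, h, _ => by simp at h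
  | app f ts, _, _, i :: p, h, b => by
      obtain ⟨x, y, hx, hy, rfl⟩ := replaceAt_app_cons_eq_some.mp h
      simp only [replaceAt_app_cons, List.getElem?_set_self_of_getElem?_eq_some hx, hx,
        Option.bind_some, replaceAt_idem hy b, List.set_set]

theorem replaceAt_eq_self : ∀ {t u : Trm F} {p : List ℕ},
    subtermAt t p = some u → replaceAt t p u = some t
  | _, _, [], h => by simp_all
  | var _, _, _ :: _, h => by simp at h
  | app f ts, _, i :: p, h => by
      obtain ⟨a, ha, hs⟩ := subtermAt_app_cons_eq_some.mp h
      simp [ha, replaceAt_eq_self hs, List.set_eq_self_of_getElem? ha]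

theorem replaceAt_append_eq_some : ∀ {t c t' : Trm F} {p q : List ℕ},
    replaceAt t (p ++ q) c = some t' ↔
      ∃ s s', subtermAt t p = some s ∧ replaceAt s q c = some s' ∧ replaceAt t p s' = some t'
  | _, _, _, [], _ => by simp
  | var _, _, _, _ :: _, _ => by simp
  | app f ts, c, t', i :: p, q => by
      simp only [List.cons_append, replaceAt_app_cons_eq_some, replaceAt_append_eq_some,
        subtermAt_app_cons_eq_some]
      constructor
      · rintro ⟨a, b, ha, ⟨s, s', hs, hss', hab⟩, rfl⟩
        exact ⟨s, s', ⟨a, ha, hs⟩, hss', a, b, ha, hab, rfl⟩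
      · rintro ⟨s, s', ⟨a, ha, hs⟩, hss', a', b, ha', hab, rfl⟩
        rw [ha] at ha'; cases ha'
        exact ⟨a, b, ha, ⟨s, s', hs, hss', hab⟩, rfl⟩

theorem replaceAt_comm : ∀ {t a b t₁ t₂ : Trm F} {p q : List ℕ}, Indep p q →
    replaceAt t p a = some t₁ → replaceAt t₁ q b = some t₂ →
    ∃ t₁', replaceAt t q b = some t₁' ∧ replaceAt t₁' p a = some t₂
  | _, _, _, _, _, [], _, hpq, _, _ => absurd List.nil_prefix hpq.1
  | _, _, _, _, _, _ :: _, [], hpq, _, _ => absurd List.nil_prefix hpq.2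
  | var _, _, _, _, _, _ :: _, _ :: _, _, h, _ => by simp at h
  | app f ts, _, _, _, _, i :: p, j :: q, hpq, h₁, h₂ => by
      obtain ⟨x, y, hx, hy, rfl⟩ := replaceAt_app_cons_eq_some.mp h₁
      obtain ⟨x', y', hx', hy', rfl⟩ := replaceAt_app_cons_eq_some.mp h₂
      by_cases hij : i = j
      · subst hij
        rw [List.getElem?_set_self_of_getElem?_eq_some hx, Option.some_inj] at hx'
        subst hx'
        obtain ⟨z, hz₁, hz₂⟩ := replaceAt_comm ((indep_append_iff [i]).mp hpq) hy hy'
        refine ⟨app f (ts.set i z), replaceAt_app_cons_eq_some.mpr ⟨x, z, hx, hz₁, rfl⟩,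
          replaceAt_app_cons_eq_some.mpr ⟨z, y', ?_, hz₂, by simp⟩⟩
        exact List.getElem?_set_self_of_getElem?_eq_some hx _
      · rw [List.getElem?_set_ne hij] at hx'
        refine ⟨app f (ts.set j y'), replaceAt_app_cons_eq_some.mpr ⟨x', y', hx', hy', rfl⟩,
          replaceAt_app_cons_eq_some.mpr ⟨x, y, ?_, hy, by rw [List.set_comm _ _ hij]⟩⟩
        rwa [List.getElem?_set_ne (Ne.symm hij)]

theorem subtermAt_subst (σ : ℕ → Trm F) : ∀ {l s : Trm F} {v : List ℕ},
    subtermAt l v = some s → subtermAt (subst σ l) v = some (subst σ s)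
  | _, _, [], h => by simp_all
  | var _, _, _ :: _, h => by simp at h
  | app f ts, _, i :: v, h => by
      obtain ⟨a, ha, hs⟩ := subtermAt_app_cons_eq_some.mp h
      simp [ha, subtermAt_subst σ hs]

theorem subst_congr {t : Trm F} {σ τ : ℕ → Trm F} (h : ∀ n ∈ varList t, σ n = τ n) :
    subst σ t = subst τ t := by
  induction t with
  | var n => simpa using h n (by simp)
  | app f ts ih =>
      simp only [subst_app, app.injEq, true_and]
      exact List.map_congr_left fun a ha => ih a ha fun n hn => h n (by simpa using ⟨a, ha, hn⟩)

theorem subst_update_of_notMem {t : Trm F} {n : ℕ} (h : n ∉ varList t) (σ : ℕ → Trm F)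
    (a : Trm F) : subst (Function.update σ n a) t = subst σ t :=
  subst_congr fun _ hm => Function.update_of_ne (ne_of_mem_of_not_mem hm h) _ _

theorem mem_varList_of_subtermAt : ∀ {t s : Trm F} {v : List ℕ} {n : ℕ},
    subtermAt t v = some s → n ∈ varList s → n ∈ varList t
  | _, _, [], _, h, hn => by simp_all
  | var _, _, _ :: _, _, h, _ => by simp at h
  | app f ts, _, i :: v, _, h, hn => by
      obtain ⟨a, ha, hs⟩ := subtermAt_app_cons_eq_some.mp h
      simpa using ⟨a, List.mem_of_getElem? ha, mem_varList_of_subtermAt hs hn⟩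

theorem mem_varList_of_subtermAt_eq_var {t : Trm F} {v : List ℕ} {n : ℕ}
    (h : subtermAt t v = some (var n)) : n ∈ varList t :=
  mem_varList_of_subtermAt h (by simp)

theorem subtermAt_subst_cases {σ : ℕ → Trm F} : ∀ {l u : Trm F} {d : List ℕ},
    subtermAt (subst σ l) d = some u →
      (∃ s, subtermAt l d = some s ∧ ¬ IsVar s ∧ u = subst σ s) ∨
      ∃ v n, subtermAt l v = some (var n) ∧ v <+: d
  | var n, _, d, _ => Or.inr ⟨[], n, by simp, List.nil_prefix⟩
  | app f ts, u, [], h => Or.inl ⟨app f ts, by simp, by simp [IsVar], by simpa [eq_comm] using h⟩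
  | app f ts, u, i :: d, h => by
      simp only [subst_app, subtermAt_app_cons_eq_some, List.getElem?_map,
        Option.map_eq_some_iff] at h
      obtain ⟨_, ⟨a, ha, rfl⟩, hs⟩ := h
      rcases subtermAt_subst_cases hs with ⟨s, h₁, h₂, h₃⟩ | ⟨v, n, h₁, h₂⟩
      · exact Or.inl ⟨s, by simp [ha, h₁], h₂, h₃⟩
      · exact Or.inr ⟨i :: v, n, by simp [ha, h₁], List.cons_prefix_cons.mpr ⟨rfl, h₂⟩⟩
termination_by l => sizeOf l
decreasing_by have := List.sizeOf_lt_of_mem (List.mem_of_getElem? ha); simp; omega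

theorem nodup_varList_of_getElem? {f : F} {ts : List (Trm F)} {i : ℕ} {a : Trm F}
    (h : (varList (app f ts)).Nodup) (ha : ts[i]? = some a) : (varList a).Nodup :=
  (List.nodup_flatMap.mp (by simpa using h)).1 a (List.mem_of_getElem? ha)

theorem eq_of_subtermAt_eq_var_of_nodup : ∀ {l : Trm F}, (varList l).Nodup →
    ∀ {v v' : List ℕ} {n : ℕ}, subtermAt l v = some (var n) →
      subtermAt l v' = some (var n) → v = v'
  | _, _, [], [], _, _, _ => rfl
  | var _, _, _ :: _, _, _, h, _ | var _, _, _, _ :: _, _, _, h => by simp at h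
  | app _ _, _, [], _, _, h, _ | app _ _, _, _, [], _, _, h => by simp at h
  | app f ts, hl, i :: v, j :: v', n, h, h' => by
      obtain ⟨a, ha, hsa⟩ := subtermAt_app_cons_eq_some.mp h
      obtain ⟨b, hb, hsb⟩ := subtermAt_app_cons_eq_some.mp h'
      by_cases hij : i = j
      · subst hij
        rw [ha, Option.some_inj] at hb
        subst hb
        rw [eq_of_subtermAt_eq_var_of_nodup (nodup_varList_of_getElem? hl ha) hsa hsb]
      · exact absurd (mem_varList_of_subtermAt_eq_var hsb)
          (List.disjoint_of_nodup_flatMap (by simpa using hl) hij ha hb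
            (mem_varList_of_subtermAt_eq_var hsa))

theorem replaceAt_subst_eq_subst_update {c : Trm F} {σ : ℕ → Trm F} {w : List ℕ} :
    ∀ {l z : Trm F} {v : List ℕ} {n : ℕ}, (varList l).Nodup → subtermAt l v = some (var n) →
      replaceAt (subst σ l) (v ++ w) c = some z →
      ∃ a, replaceAt (σ n) w c = some a ∧ z = subst (Function.update σ n a) l
  | var m, z, [], n, _, hv, h => by
      obtain rfl : m = n := by simpa using hv
      exact ⟨z, by simpa using h, by simp⟩
  | var _, _, _ :: _, _, _, hv, _ | app _ _, _, [], _, _, hv, _ => by simp at hv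
  | app f ts, _, i :: v, n, hl, hv, h => by
      obtain ⟨b, hb, hvb⟩ := subtermAt_app_cons_eq_some.mp hv
      rw [subst_app, List.cons_append] at h
      obtain ⟨x, y, hx, hy, rfl⟩ := replaceAt_app_cons_eq_some.mp h
      obtain rfl : x = subst σ b := by simpa [hb] using hx.symm
      obtain ⟨a, hra, rfl⟩ :=
        replaceAt_subst_eq_subst_update (nodup_varList_of_getElem? hl hb) hvb hy
      refine ⟨a, hra, ?_⟩
      simp only [subst_app, app.injEq, true_and]
      refine List.ext_getElem? fun k => ?_
      by_cases hk : i = k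
      · subst hk
        rw [List.getElem?_set_self_of_getElem?_eq_some hx]
        simp [hb]
      · rw [List.getElem?_set_ne hk, List.getElem?_map, List.getElem?_map]
        cases htk : ts[k]? with
        | none => rfl
        | some tk =>
            refine congrArg some (subst_update_of_notMem (fun hn => ?_) σ a).symm
            exact List.disjoint_of_nodup_flatMap (by simpa using hl) hk hb htk
              (mem_varList_of_subtermAt_eq_var hvb) hn
termination_by l => sizeOf l
decreasing_by have := List.sizeOf_lt_of_mem (List.mem_of_getElem? hb); simp; omega

end Trm

/-- `NonOutStepAt R t t' p` and the clauses of `ParNonOut` unfold to this. -/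
def BelowRedex (R : Set (Rule F)) (t : Trm F) (p : List ℕ) : Prop :=
  ∃ q, StrictPref q p ∧ HasRedexAt R t q

section Steps

variable {R : Set (Rule F)} {t t' t₁ t₂ x y : Trm F} {p q : List ℕ}

theorem BelowRedex.mono (h : BelowRedex R t p) (hp : p <+: q) : BelowRedex R t q :=
  let ⟨e, he, hr⟩ := h
  ⟨e, ⟨he.1.trans hp, fun heq => he.not_prefix (heq ▸ hp)⟩, hr⟩

theorem outStepAt_iff : OutStepAt R t t' p ↔ RewriteAt R t t' p ∧ ¬ BelowRedex R t p := by
  simp [OutStepAt, BelowRedex]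

theorem RewriteAt.subtermAt_of_indep (h : RewriteAt R t t' p) (hpq : Indep p q) :
    subtermAt t' q = subtermAt t q :=
  let ⟨_, _, _, _, _, hrep⟩ := h
  subtermAt_of_replaceAt_of_indep hpq hrep

theorem RewriteAt.hasRedexAt_of_indep (h : RewriteAt R t t' p) (hpq : Indep p q)
    (hr : HasRedexAt R t q) : HasRedexAt R t' q := by
  rwa [HasRedexAt, h.subtermAt_of_indep hpq]

theorem RewriteAt.swap_of_indep (h₁ : RewriteAt R t t₁ p) (h₂ : RewriteAt R t₁ t₂ q)
    (hpq : Indep p q) : ∃ t₁', RewriteAt R t t₁' q ∧ RewriteAt R t₁' t₂ p := by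
  obtain ⟨l, r, σ, hlr, hsub, hrep⟩ := h₁
  obtain ⟨l', r', σ', hlr', hsub', hrep'⟩ := h₂
  obtain ⟨c, hc₁, hc₂⟩ := replaceAt_comm hpq hrep hrep'
  refine ⟨c, ⟨l', r', σ', hlr', ?_, hc₁⟩, ⟨l, r, σ, hlr, ?_, hc₂⟩⟩
  · rwa [← subtermAt_of_replaceAt_of_indep hpq hrep]
  · rwa [subtermAt_of_replaceAt_of_indep hpq.symm hc₁]

theorem RewriteAt.replaceAt_of_indep {c : Trm F} (h : RewriteAt R t t' p) (hpq : Indep p q)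
    (hrep : replaceAt t q c = some t₁) :
    ∃ t₁', replaceAt t' q c = some t₁' ∧ RewriteAt R t₁ t₁' p := by
  obtain ⟨l, r, σ, hlr, hsub, hrepl⟩ := h
  have hsub₁ : subtermAt t₁ p = some (subst σ l) := by
    rwa [subtermAt_of_replaceAt_of_indep hpq.symm hrep]
  obtain ⟨t₁', ht₁'⟩ := exists_replaceAt_of_subtermAt (subst σ r) hsub₁
  obtain ⟨w, hw₁, hw₂⟩ := replaceAt_comm hpq.symm hrep ht₁'
  rw [hrepl, Option.some_inj] at hw₁
  subst hw₁
  exact ⟨t₁', hw₂, l, r, σ, hlr, hsub₁, ht₁'⟩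

theorem rewriteAt_append_iff {s : Trm F} (hs : subtermAt t p = some s) :
    RewriteAt R t t' (p ++ q) ↔ ∃ s', RewriteAt R s s' q ∧ replaceAt t p s' = some t' := by
  simp only [RewriteAt, subtermAt_append, hs, Option.bind_some, replaceAt_append_eq_some]
  constructor
  · rintro ⟨l, r, σ, hlr, hsub, s₀, s', hs₀, hrep, hrep'⟩
    rw [Option.some_inj] at hs₀
    subst hs₀
    exact ⟨s', ⟨l, r, σ, hlr, hsub, hrep⟩, hrep'⟩
  · rintro ⟨s', ⟨l, r, σ, hlr, hsub, hrep⟩, hrep'⟩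
    exact ⟨l, r, σ, hlr, hsub, s, s', rfl, hrep, hrep'⟩

theorem StepsAt.append {ps qs : List (List ℕ)} (h₁ : StepsAt R t t₁ ps)
    (h₂ : StepsAt R t₁ t₂ qs) : StepsAt R t t₂ (ps ++ qs) := by
  induction h₁ with
  | nil => exact h₂
  | cons hstep _ ih => exact .cons hstep (ih h₂)

theorem stepsAt_cons_iff {ps : List (List ℕ)} :
    StepsAt R t t' (p :: ps) ↔ ∃ t₁, RewriteAt R t t₁ p ∧ StepsAt R t₁ t' ps :=
  ⟨fun | .cons h₁ h₂ => ⟨_, h₁, h₂⟩, fun ⟨_, h₁, h₂⟩ => .cons h₁ h₂⟩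

theorem StepsAt.subtermAt_of_indep {ps : List (List ℕ)} (h : StepsAt R t t' ps)
    (hind : ∀ p ∈ ps, Indep p q) : subtermAt t' q = subtermAt t q := by
  induction h with
  | nil => rfl
  | cons hstep _ ih =>
      rw [ih fun p hp => hind p (List.mem_cons_of_mem _ hp),
        hstep.subtermAt_of_indep (hind _ List.mem_cons_self)]

theorem StepsAt.replaceAt_of_indep {c : Trm F} {ps : List (List ℕ)} (h : StepsAt R t t' ps)
    (hind : ∀ p ∈ ps, Indep p q) (hrep : replaceAt t q c = some t₁) :
    ∃ t₁', replaceAt t' q c = some t₁' ∧ StepsAt R t₁ t₁' ps := by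
  induction h generalizing t₁ with
  | nil => exact ⟨t₁, hrep, .nil _⟩
  | cons hstep _ ih =>
      obtain ⟨b, hb, hstep'⟩ := hstep.replaceAt_of_indep (hind _ List.mem_cons_self) hrep
      obtain ⟨t₁', ht₁', hsteps'⟩ := ih (fun p hp => hind p (List.mem_cons_of_mem _ hp)) hb
      exact ⟨t₁', ht₁', .cons hstep' hsteps'⟩

theorem RewriteAt.swap_stepsAt {qs : List (List ℕ)} (h : RewriteAt R t t₁ p)
    (hsteps : StepsAt R t₁ t' qs) (hind : ∀ q ∈ qs, Indep p q) :
    ∃ t₂, StepsAt R t t₂ qs ∧ RewriteAt R t₂ t' p := by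
  induction hsteps generalizing t with
  | nil => exact ⟨t, .nil t, h⟩
  | cons hq _ ih =>
      obtain ⟨d, hd₁, hd₂⟩ := h.swap_of_indep hq (hind _ List.mem_cons_self)
      obtain ⟨t₂, ht₂, ht₂'⟩ := ih hd₂ fun q hq => hind q (List.mem_cons_of_mem _ hq)
      exact ⟨t₂, .cons hd₁ ht₂, ht₂'⟩

theorem StepsAt.partition (c : List ℕ → Bool) {ps : List (List ℕ)} (h : StepsAt R t t' ps)
    (hpw : ps.Pairwise Indep) :
    ∃ m, StepsAt R t m (ps.filter c) ∧ StepsAt R m t' (ps.filter fun p => !c p) := by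
  induction h with
  | nil => exact ⟨_, .nil _, .nil _⟩
  | @cons t t₁ t' p ps hstep _ ih =>
      obtain ⟨m, hm₁, hm₂⟩ := ih hpw.of_cons
      by_cases hc : c p
      · exact ⟨m, by simpa [hc] using hm₁.cons hstep, by simpa [hc] using hm₂⟩
      · obtain ⟨m', hm', hm'₂⟩ := hstep.swap_stepsAt hm₁
          fun q hq => (List.pairwise_cons.mp hpw).1 q (List.mem_of_mem_filter hq)
        exact ⟨m', by simpa [hc] using hm', by simpa [hc] using StepsAt.cons hm'₂ hm₂⟩

theorem StepsAt.lift {s s' : Trm F} {ws : List (List ℕ)} (hsub : subtermAt x p = some s)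
    (h : StepsAt R s s' ws) :
    ∃ x', replaceAt x p s' = some x' ∧ StepsAt R x x' (ws.map (p ++ ·)) := by
  induction h generalizing x with
  | nil => exact ⟨x, replaceAt_eq_self hsub, .nil x⟩
  | @cons s s₁ s' w ws hstep _ ih =>
      obtain ⟨x₁, hx₁⟩ := exists_replaceAt_of_subtermAt s₁ hsub
      obtain ⟨x', hx', hsteps⟩ := ih (subtermAt_of_replaceAt hx₁)
      refine ⟨x', ?_, .cons ((rewriteAt_append_iff hsub).mpr ⟨s₁, hstep, hx₁⟩) hsteps⟩
      rwa [← replaceAt_idem hx₁]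

theorem StepsAt.strip {z : Trm F} {bs : List (List ℕ)} (h : StepsAt R x y bs)
    (hbelow : ∀ b ∈ bs, p <+: b) (hz : subtermAt y p = some z) :
    ∃ s ds, subtermAt x p = some s ∧ StepsAt R s z ds ∧ bs = ds.map (p ++ ·) ∧
      replaceAt x p z = some y := by
  induction h with
  | nil => exact ⟨z, [], hz, .nil z, rfl, replaceAt_eq_self hz⟩
  | @cons x x₁ y b bs hstep _ ih =>
      obtain ⟨d, rfl⟩ := hbelow b List.mem_cons_self
      obtain ⟨s, hs⟩ : ∃ s, subtermAt x p = some s := by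
        obtain ⟨l, r, σ, -, hsub, -⟩ := hstep
        rw [subtermAt_append] at hsub
        exact Option.ne_none_iff_exists'.mp fun h => by simp [h] at hsub
      obtain ⟨s₁, hstep', hrep⟩ := (rewriteAt_append_iff hs).mp hstep
      obtain ⟨s₁', ds, hs₁', hsteps, rfl, hrep'⟩ :=
        ih (fun b hb => hbelow b (List.mem_cons_of_mem _ hb)) hz
      rw [subtermAt_of_replaceAt hrep, Option.some_inj] at hs₁'
      subst hs₁'
      refine ⟨s, d :: ds, hs, .cons hstep' hsteps, rfl, ?_⟩
      rwa [← replaceAt_idem hrep]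

end Steps

section Orthogonal

variable {R : Set (Rule F)} {l r l₂ r₂ s s' t t' : Trm F} {σ τ : ℕ → Trm F} {d p q : List ℕ}

theorem Orthogonal.exists_var_prefix_of_isRedex (ho : Orthogonal R) (hlr : (l, r) ∈ R)
    {u : Trm F} (hd : subtermAt (subst σ l) d = some u) (hu : IsRedex R u) (hne : d ≠ []) :
    ∃ v n, subtermAt l v = some (var n) ∧ v <+: d := by
  rcases subtermAt_subst_cases hd with ⟨s, hs, hnv, rfl⟩ | hvar
  · obtain ⟨l₂, r₂, τ, h₂, heq⟩ := hu
    exact absurd (ho.2 l r l₂ r₂ hlr h₂ d s hs hnv σ τ heq).1 hne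
  · exact hvar

theorem Orthogonal.eq_of_subst_eq (ho : Orthogonal R) (h₁ : (l, r) ∈ R) (h₂ : (l₂, r₂) ∈ R)
    (hnv : ¬ IsVar l) (heq : subst σ l = subst τ l₂) : l = l₂ ∧ r = r₂ :=
  (ho.2 l r l₂ r₂ h₁ h₂ [] l (by simp) hnv σ τ heq).2

/-- `var m` matches every term, so any other left-hand side would overlap it at the root. -/
theorem Orthogonal.exists_eq_var (ho : Orthogonal R) (h₁ : (l, r) ∈ R) (h₂ : (l₂, r₂) ∈ R)
    (hv : IsVar l) : ∃ n, l₂ = var n := by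
  cases l₂ with
  | var n => exact ⟨n, rfl⟩
  | app f ts =>
      cases l with
      | app => exact hv.elim
      | var m =>
          have := (ho.2 (app f ts) r₂ (var m) r h₂ h₁ [] (app f ts) (by simp) id var
            (fun _ => subst var (app f ts)) (by simp)).2.1
          simp at this

theorem Orthogonal.subst_of_rewriteAt (ho : Orthogonal R) (hlr : (l, r) ∈ R)
    (h : RewriteAt R (subst σ l) s' d) (hd : d ≠ []) :
    ∃ σ', s' = subst σ' l ∧ ∃ v n, subtermAt l v = some (var n) ∧ v <+: d := by
  obtain ⟨l', r', σ', hlr', hsub, hrep⟩ := h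
  obtain ⟨v, n, hv, w, rfl⟩ := ho.exists_var_prefix_of_isRedex hlr hsub ⟨l', r', σ', hlr', rfl⟩ hd
  obtain ⟨a, -, rfl⟩ := replaceAt_subst_eq_subst_update (ho.1 l r hlr) hv hrep
  exact ⟨_, rfl, v, n, hv, List.prefix_append v w⟩

theorem Orthogonal.hasRedexAt_of_rewriteAt (ho : Orthogonal R) (hstep : RewriteAt R t t' p)
    (hpq : ¬ p <+: q) (hr : HasRedexAt R t q) : HasRedexAt R t' q := by
  rcases strictPref_or_indep_of_not_prefix hpq with hqp | hind
  · obtain ⟨_, hs, l, r, σ, hlr, rfl⟩ := hr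
    obtain ⟨d, rfl⟩ := hqp.1
    obtain ⟨s', hstep', hrep⟩ := (rewriteAt_append_iff hs).mp hstep
    obtain ⟨σ', rfl, -⟩ := ho.subst_of_rewriteAt hlr hstep' fun h => hqp.2 (by simp [h])
    exact ⟨_, subtermAt_of_replaceAt hrep, l, r, σ', hlr, rfl⟩
  · exact hstep.hasRedexAt_of_indep hind hr

theorem Orthogonal.hasRedexAt_of_stepsAt (ho : Orthogonal R) {ps : List (List ℕ)}
    (h : StepsAt R t t' ps) (hnp : ∀ p ∈ ps, ¬ p <+: q) (hr : HasRedexAt R t q) :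
    HasRedexAt R t' q := by
  induction h with
  | nil => exact hr
  | cons hstep _ ih =>
      exact ih (fun p hp => hnp p (List.mem_cons_of_mem _ hp))
        (ho.hasRedexAt_of_rewriteAt hstep (hnp _ List.mem_cons_self) hr)

theorem Orthogonal.belowRedex_of_stepsAt (ho : Orthogonal R) {ps : List (List ℕ)}
    (h : StepsAt R t t' ps) (hnp : ∀ p ∈ ps, ¬ p <+: d) (hb : BelowRedex R t d) :
    BelowRedex R t' d :=
  let ⟨q, hq, hr⟩ := hb
  ⟨q, hq, ho.hasRedexAt_of_stepsAt h (fun p hp hpq => hnp p hp (hpq.trans hq.1)) hr⟩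

theorem Orthogonal.belowRedex_of_rewriteAt (ho : Orthogonal R) (hstep : RewriteAt R t t' p)
    (hpd : ¬ p <+: d) (hb : BelowRedex R t d) : BelowRedex R t' d :=
  ho.belowRedex_of_stepsAt (.cons hstep (.nil _)) (by simpa using hpd) hb

theorem Orthogonal.belowRedex_of_stepsAt_of_mem (ho : Orthogonal R) {ps : List (List ℕ)}
    (h : StepsAt R t t' ps) (hpw : ps.Pairwise Indep) (hp : p ∈ ps) (hb : BelowRedex R t p) :
    BelowRedex R t' p := by
  obtain ⟨q, hq, hr⟩ := hb
  refine ⟨q, hq, ho.hasRedexAt_of_stepsAt h (fun p' hp' hpq => ?_) hr⟩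
  by_cases hpp : p' = p
  · subst hpp
    exact hq.not_prefix hpq
  · exact (hpw.forall hp' hp hpp).1 (hpq.trans hq.1)

end Orthogonal

section Reconstruct

variable {R : Set (Rule F)} {l l₂ r₂ s z : Trm F} {τ : ℕ → Trm F} {d v w : List ℕ} {n : ℕ}

theorem RewriteAt.exists_subst_update (hl : (varList l).Nodup)
    (hv : subtermAt l v = some (var n)) (h : RewriteAt R s (subst τ l) (v ++ w)) :
    ∃ a, s = subst (Function.update τ n a) l ∧ RewriteAt R a (τ n) w := by
  obtain ⟨l', r', σ', hlr', hsub, hrep⟩ := h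
  have hback : replaceAt (subst τ l) (v ++ w) (subst σ' l') = some s := by
    rw [replaceAt_idem hrep]
    exact replaceAt_eq_self hsub
  obtain ⟨a, ha, rfl⟩ := replaceAt_subst_eq_subst_update hl hv hback
  have hτn : subtermAt (τ n) w = some (subst σ' r') := by
    have := subtermAt_of_replaceAt hrep
    rwa [subtermAt_append, subtermAt_subst τ hv, Option.bind_some, subst_var] at this
  refine ⟨a, rfl, l', r', σ', hlr', subtermAt_of_replaceAt ha, ?_⟩
  rw [replaceAt_idem ha]
  exact replaceAt_eq_self hτn

/-- The redex witnessing non-outermostness is either the whole of `s`, whose pattern survives the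
step and so is `l₂` by non-overlap, or it survives strictly inside `subst τ l₂`, below a variable. -/
theorem Orthogonal.exists_var_prefix_of_rewriteAt (ho : Orthogonal R) (hl₂ : (l₂, r₂) ∈ R)
    (hstep : RewriteAt R s (subst τ l₂) d) (hb : BelowRedex R s d) :
    ∃ v n, subtermAt l₂ v = some (var n) ∧ v <+: d := by
  obtain ⟨e, he, hre⟩ := hb
  by_cases he₀ : e = []
  · subst he₀
    obtain ⟨_, hs, l, r, σ, hlr, rfl⟩ := hre
    obtain rfl : s = subst σ l := by simpa using hs
    by_cases hvl : IsVar l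
    · obtain ⟨n, rfl⟩ := ho.exists_eq_var hlr hl₂ hvl
      exact ⟨[], n, by simp, List.nil_prefix⟩
    · obtain ⟨σ', heq, hvar⟩ := ho.subst_of_rewriteAt hlr hstep fun h => he.2 h.symm
      obtain ⟨rfl, -⟩ := ho.eq_of_subst_eq hlr hl₂ hvl heq.symm
      exact hvar
  · obtain ⟨u, hu, hured⟩ := ho.hasRedexAt_of_rewriteAt hstep he.not_prefix hre
    obtain ⟨v, n, hv, hve⟩ := ho.exists_var_prefix_of_isRedex hl₂ hu hured he₀
    exact ⟨v, n, hv, hve.trans he.1⟩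

/-- The last conjunct traces the steps of each variable back to `ds`; it is what keeps them
pairwise independent along the induction. -/
theorem Orthogonal.exists_subst_of_stepsAt (ho : Orthogonal R) (hl₂ : (l₂, r₂) ∈ R)
    {ds : List (List ℕ)} (hsteps : StepsAt R s z ds) (hpw : ds.Pairwise Indep)
    (hb : ∀ d ∈ ds, BelowRedex R s d) (hz : z = subst τ l₂) :
    ∃ τ₀, s = subst τ₀ l₂ ∧ ∀ n, ∃ ws, ws.Pairwise Indep ∧ StepsAt R (τ₀ n) (τ n) ws ∧
      ∀ w ∈ ws, ∃ v, subtermAt l₂ v = some (var n) ∧ v ++ w ∈ ds := by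
  induction hsteps with
  | nil => exact ⟨τ, hz, fun n => ⟨[], by simp, .nil _, by simp⟩⟩
  | @cons s s₁ z d ds hstep _ ih =>
      have hind := (List.pairwise_cons.mp hpw).1
      obtain ⟨τ₁, rfl, hτ₁⟩ := ih hpw.of_cons (fun d' hd' => ho.belowRedex_of_rewriteAt hstep
        (hind d' hd').1 (hb d' (List.mem_cons_of_mem _ hd'))) hz
      obtain ⟨v, n, hv, w, rfl⟩ :=
        ho.exists_var_prefix_of_rewriteAt hl₂ hstep (hb _ List.mem_cons_self)
      obtain ⟨a, rfl, hstep'⟩ := hstep.exists_subst_update (ho.1 _ _ hl₂) hv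
      refine ⟨Function.update τ₁ n a, rfl, fun m => ?_⟩
      obtain ⟨ws, hws, hsteps, hpos⟩ := hτ₁ m
      have hpos' : ∀ w' ∈ ws, ∃ v', subtermAt l₂ v' = some (var m) ∧ v' ++ w' ∈ (v ++ w) :: ds :=
        fun w' hw' => (hpos w' hw').imp fun _ h => ⟨h.1, List.mem_cons_of_mem _ h.2⟩
      by_cases hmn : m = n
      · subst hmn
        refine ⟨w :: ws, List.pairwise_cons.mpr ⟨fun w' hw' => ?_, hws⟩, ?_, ?_⟩
        · obtain ⟨v', hv', hmem⟩ := hpos w' hw'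
          obtain rfl := eq_of_subtermAt_eq_var_of_nodup (ho.1 _ _ hl₂) hv' hv
          exact (indep_append_iff v').mp (hind _ hmem)
        · rw [Function.update_self]
          exact .cons hstep' hsteps
        · exact List.forall_mem_cons.mpr ⟨⟨v, hv, List.mem_cons_self⟩, hpos'⟩
      · rw [Function.update_of_ne hmn]
        exact ⟨ws, hws, hsteps, hpos'⟩

end Reconstruct

section ParStep

variable {R : Set (Rule F)}

theorem stepsAt_app_append {f : F} {g h : Trm F → Trm F} :
    ∀ {ts : List (Trm F)} (pre : List (Trm F)), (∀ a ∈ ts, ParStep R (g a) (h a)) →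
    ∃ os, os.Pairwise Indep ∧ (∀ o ∈ os, ∃ i w, pre.length ≤ i ∧ o = i :: w) ∧
      StepsAt R (app f (pre ++ ts.map g)) (app f (pre ++ ts.map h)) os
  | [], _, _ => ⟨[], by simp, by simp, .nil _⟩
  | a :: ts, pre, hts => by
      obtain ⟨ws, hws, hsteps⟩ := hts a List.mem_cons_self
      obtain ⟨x, hx, hlift⟩ := hsteps.lift (x := app f (pre ++ g a :: ts.map g)) (p := [pre.length])
        (by simp)
      obtain rfl : x = app f (pre ++ h a :: ts.map g) := by simpa [eq_comm] using hx
      obtain ⟨os, hos, hpos, hsteps'⟩ :=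
        stepsAt_app_append (pre ++ [h a]) fun b hb => hts b (List.mem_cons_of_mem _ hb)
      simp only [List.append_assoc, List.singleton_append, List.length_append,
        List.length_singleton] at hsteps' hpos
      refine ⟨ws.map ([pre.length] ++ ·) ++ os, List.pairwise_append.mpr ⟨?_, hos, ?_⟩, ?_,
        hlift.append hsteps'⟩
      · exact List.pairwise_map.mpr (hws.imp (indep_append_iff _).mpr)
      · intro o ho o' ho'
        obtain ⟨w, -, rfl⟩ := List.mem_map.mp ho
        obtain ⟨i, w', hi, rfl⟩ := hpos o' ho'
        exact indep_cons_cons_of_ne (by omega) _ _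
      · intro o ho
        rcases List.mem_append.mp ho with ho | ho
        · obtain ⟨w, -, rfl⟩ := List.mem_map.mp ho
          exact ⟨pre.length, w, le_rfl, rfl⟩
        · obtain ⟨i, w, hi, rfl⟩ := hpos o ho
          exact ⟨i, w, by omega, rfl⟩

theorem ParStep.subst {σ τ : ℕ → Trm F} :
    ∀ {r : Trm F}, (∀ n ∈ varList r, ParStep R (σ n) (τ n)) →
      ParStep R (subst σ r) (subst τ r)
  | var n, h => by simpa using h n (by simp)
  | app f ts, h => by
      obtain ⟨os, hos, -, hsteps⟩ := stepsAt_app_append (f := f) (R := R) (ts := ts) [] fun a ha =>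
        ParStep.subst fun n hn => h n (by simpa using ⟨a, ha, hn⟩)
      exact ⟨os, hos, by simpa using hsteps⟩

end ParStep

section Swap

variable {R : Set (Rule F)} {l₂ r₂ s x u u₁ z : Trm F} {τ : ℕ → Trm F} {p d : List ℕ}

theorem Orthogonal.exists_subst_of_parNonOut (ho : Orthogonal R) (hl₂ : (l₂, r₂) ∈ R)
    (h : ParNonOut R s (subst τ l₂)) :
    ∃ τ₀, s = subst τ₀ l₂ ∧ ParStep R (subst τ₀ r₂) (subst τ r₂) := by
  obtain ⟨ds, hpw, hb, hsteps⟩ := h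
  obtain ⟨τ₀, rfl, hτ₀⟩ := ho.exists_subst_of_stepsAt hl₂ hsteps hpw hb rfl
  refine ⟨τ₀, rfl, ParStep.subst fun n _ => ?_⟩
  obtain ⟨ws, hws, hsteps, -⟩ := hτ₀ n
  exact ⟨ws, hws, hsteps⟩

theorem BelowRedex.of_append (h : BelowRedex R x (p ++ d)) (hx : ¬ BelowRedex R x p)
    (hs : subtermAt x p = some s) : BelowRedex R s d := by
  obtain ⟨q, hq, hr⟩ := h
  by_cases hpq : p <+: q
  · obtain ⟨e, rfl⟩ := hpq
    obtain ⟨_, hse, hred⟩ := hr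
    rw [subtermAt_append, hs, Option.bind_some] at hse
    exact ⟨e, hq.of_append, _, hse, hred⟩
  · have hqp := (List.prefix_or_prefix_of_prefix hq.1 (List.prefix_append p d)).resolve_right hpq
    exact absurd ⟨q, ⟨hqp, by rintro rfl; exact hpq hqp⟩, hr⟩ hx

theorem StepsAt.exists_split {ps : List (List ℕ)} (h : StepsAt R x u ps)
    (hpw : ps.Pairwise Indep) (hnp : ∀ q ∈ ps, ¬ q <+: p) (hz : subtermAt u p = some z) :
    ∃ s ds m as, subtermAt x p = some s ∧ StepsAt R s z ds ∧ (ds.map (p ++ ·)).Sublist ps ∧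
      replaceAt x p z = some m ∧ StepsAt R m u as ∧ as.Pairwise Indep ∧ ∀ a ∈ as, Indep a p := by
  obtain ⟨m, hbelow, hasteps⟩ := h.partition (fun q => decide (p <+: q)) hpw
  have hind : ∀ a ∈ ps.filter (fun q => !decide (p <+: q)), Indep a p := by
    intro a ha
    simp only [List.mem_filter, Bool.not_eq_true', decide_eq_false_iff_not] at ha
    exact ⟨hnp a ha.1, ha.2⟩
  obtain ⟨s, ds, hs, hds, hbelow_eq, hm⟩ :=
    hbelow.strip (p := p) (fun b hb => by simpa using (List.mem_filter.mp hb).2)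
      (by rwa [hasteps.subtermAt_of_indep hind] at hz)
  exact ⟨s, ds, m, _, hs, hds, hbelow_eq ▸ List.filter_sublist, hm, hasteps,
    hpw.sublist List.filter_sublist, hind⟩

theorem Orthogonal.swap_parNonOut_outStepAt (ho : Orthogonal R) (hpn : ParNonOut R x u)
    (hout : OutStepAt R u u₁ p) : ∃ x₁, OutStepAt R x x₁ p ∧ ParStep R x₁ u₁ := by
  obtain ⟨ps, hpw, hb, hsteps⟩ := hpn
  obtain ⟨⟨l₂, r₂, τ, hl₂, hsub, hrep⟩, hout⟩ := outStepAt_iff.mp hout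
  have hnp : ∀ q ∈ ps, ¬ q <+: p := fun q hq hqp =>
    hout ((ho.belowRedex_of_stepsAt_of_mem hsteps hpw hq (hb q hq)).mono hqp)
  have hxout : ¬ BelowRedex R x p := fun hx => hout (ho.belowRedex_of_stepsAt hsteps hnp hx)
  obtain ⟨s, ds, m, as, hs, hds, hds_sub, hm, has, has_pw, has_ind⟩ :=
    hsteps.exists_split hpw hnp hsub
  have hpn : ParNonOut R s (subst τ l₂) := by
    refine ⟨ds, ?_, fun d hd =>
      BelowRedex.of_append (hb _ (hds_sub.subset (List.mem_map_of_mem hd))) hxout hs, hds⟩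
    exact (List.pairwise_map.mp (hpw.sublist hds_sub)).imp (indep_append_iff p).mp
  obtain ⟨τ₀, rfl, os, hos, hsteps_os⟩ := ho.exists_subst_of_parNonOut hl₂ hpn
  obtain ⟨x₁, hx₁⟩ := exists_replaceAt_of_subtermAt (subst τ₀ r₂) hs
  refine ⟨x₁, outStepAt_iff.mpr ⟨⟨l₂, r₂, τ₀, hl₂, hs, hx₁⟩, hxout⟩, ?_⟩
  obtain ⟨m₁, hm₁, hlift⟩ := hsteps_os.lift (subtermAt_of_replaceAt hx₁)
  have hm₁' : replaceAt m p (subst τ r₂) = some m₁ := by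
    rwa [replaceAt_idem hm, ← replaceAt_idem hx₁]
  obtain ⟨u₁', hu₁', has₁⟩ := has.replaceAt_of_indep has_ind hm₁'
  rw [hrep, Option.some_inj] at hu₁'
  subst hu₁'
  refine ⟨os.map (p ++ ·) ++ as, List.pairwise_append.mpr ⟨?_, has_pw, ?_⟩, hlift.append has₁⟩
  · exact List.pairwise_map.mpr (hos.imp (indep_append_iff p).mpr)
  · intro o hmem a ha
    obtain ⟨w, -, rfl⟩ := List.mem_map.mp hmem
    exact ((has_ind a ha).symm.of_prefix_left (List.prefix_append p w))

end Swap

section Factor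

open Relation

variable {R : Set (Rule F)} {x y u u₁ : Trm F}

theorem Orthogonal.exists_outSteps_parNonOut_of_stepsAt (ho : Orthogonal R) :
    ∀ {ps : List (List ℕ)} {x y : Trm F}, StepsAt R x y ps → ps.Pairwise Indep →
    ∃ m os qs, os ⊆ ps ∧ qs ⊆ ps ∧ StepsAt R x m os ∧ ReflTransGen (OutStep R) x m ∧
      qs.Pairwise Indep ∧ (∀ q ∈ qs, BelowRedex R m q) ∧ StepsAt R m y qs
  | [], x, _, h, _ => by
      cases h
      exact ⟨x, [], [], by simp, by simp, .nil x, .refl, by simp, by simp, .nil x⟩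
  | p :: ps, x, y, h, hpw => by
      obtain ⟨x₁, hstep, hrest⟩ := stepsAt_cons_iff.mp h
      have hind := (List.pairwise_cons.mp hpw).1
      by_cases hbx : BelowRedex R x p
      · obtain ⟨x₂, hx₂, hx₂y⟩ := hstep.swap_stepsAt hrest hind
        obtain ⟨m, os, qs, hos, hqs, hsteps_os, hout, hqs_pw, hqs_b, hsteps_qs⟩ :=
          ho.exists_outSteps_parNonOut_of_stepsAt hx₂ hpw.of_cons
        refine ⟨m, os, qs ++ [p], List.Subset.trans hos (List.subset_cons_self _ _), ?_,
          hsteps_os, hout, ?_, ?_, hsteps_qs.append (.cons hx₂y (.nil _))⟩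
        · exact List.append_subset.mpr ⟨List.Subset.trans hqs (List.subset_cons_self _ _), by simp⟩
        · refine List.pairwise_append.mpr ⟨hqs_pw, by simp, fun q hq p' hp' => ?_⟩
          obtain rfl := List.mem_singleton.mp hp'
          exact (hind q (hqs hq)).symm
        · refine List.forall_mem_append.mpr ⟨hqs_b, List.forall_mem_singleton.mpr ?_⟩
          exact ho.belowRedex_of_stepsAt hsteps_os (fun o hmem => (hind o (hos hmem)).2) hbx
      · obtain ⟨m, os, qs, hos, hqs, hsteps_os, hout, hqs_pw, hqs_b, hsteps_qs⟩ :=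
          ho.exists_outSteps_parNonOut_of_stepsAt hrest hpw.of_cons
        exact ⟨m, p :: os, qs, List.cons_subset_cons _ hos,
          List.Subset.trans hqs (List.subset_cons_self _ _), .cons hstep hsteps_os,
          .head ⟨p, outStepAt_iff.mpr ⟨hstep, hbx⟩⟩ hout, hqs_pw, hqs_b, hsteps_qs⟩

theorem Orthogonal.exists_outSteps_parNonOut_of_parStep (ho : Orthogonal R) (h : ParStep R x y) :
    ∃ m, ReflTransGen (OutStep R) x m ∧ ParNonOut R m y := by
  obtain ⟨ps, hpw, hsteps⟩ := h
  obtain ⟨m, -, qs, -, -, -, hout, hqs_pw, hqs_b, hsteps_qs⟩ :=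
    ho.exists_outSteps_parNonOut_of_stepsAt hsteps hpw
  exact ⟨m, hout, qs, hqs_pw, hqs_b, hsteps_qs⟩

theorem Orthogonal.exists_outSteps_parNonOut_of_parNonOut_outStep (ho : Orthogonal R)
    (hpn : ParNonOut R x u) (hstep : OutStep R u u₁) :
    ∃ m, ReflTransGen (OutStep R) x m ∧ ParNonOut R m u₁ := by
  obtain ⟨p, hout⟩ := hstep
  obtain ⟨x₁, hx₁, hpar⟩ := ho.swap_parNonOut_outStepAt hpn hout
  obtain ⟨m, hm, hpn'⟩ := ho.exists_outSteps_parNonOut_of_parStep hpar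
  exact ⟨m, .head ⟨p, hx₁⟩ hm, hpn'⟩

theorem Orthogonal.nonOutSteps_of_parNonOut (ho : Orthogonal R) (h : ParNonOut R x y) :
    ReflTransGen (NonOutStep R) x y := by
  obtain ⟨ps, hpw, hb, hsteps⟩ := h
  induction hsteps with
  | nil => exact .refl
  | @cons x x₁ y p ps hstep _ ih =>
      have hind := (List.pairwise_cons.mp hpw).1
      refine .head ⟨p, hstep, hb p List.mem_cons_self⟩ (ih hpw.of_cons fun q hq => ?_)
      exact ho.belowRedex_of_rewriteAt hstep (hind q hq).1 (hb q (List.mem_cons_of_mem _ hq))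

theorem outStep_or_parNonOut_of_rewrite (h : Rewrite R x y) : OutStep R x y ∨ ParNonOut R x y := by
  obtain ⟨p, hstep⟩ := h
  by_cases hb : BelowRedex R x p
  · exact .inr ⟨[p], by simp, List.forall_mem_singleton.mpr hb, .cons hstep (.nil _)⟩
  · exact .inl ⟨p, outStepAt_iff.mpr ⟨hstep, hb⟩⟩

end Factor

/-- any finite reduction of an orthogonal TRS can be rearranged into
an outermost phase followed by a non-outermost phase. -/
theorem split_out_and_nonout {F : Type} (R : Set (Rule F))
    (ho : Orthogonal R) (t t' : Trm F) (h : RewriteStar R t t') :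
    ∃ tHat, Relation.ReflTransGen (OutStep R) t tHat ∧
      Relation.ReflTransGen (NonOutStep R) tHat t' := by
  obtain ⟨tHat, hout, hpn⟩ := Relation.ReflTransGen.postpone (O := OutStep R) (P := ParNonOut R)
    (fun _ _ _ => ho.exists_outSteps_parNonOut_of_parNonOut_outStep)
    (Relation.ReflTransGen.mono (fun _ _ => outStep_or_parNonOut_of_rewrite) _ _ h)
  exact ⟨tHat, hout, Relation.reflTransGen_closed (fun _ _ => ho.nonOutSteps_of_parNonOut) _ _ hpn⟩
end

section
/- Let (Σ_d, Σ_s, R_d, R_s) be a stream specification with R_d = ∅ in which every stream symbol has at most one argument of sort s. Then in every ground term t of sort s with an outermost redex at position p, the position p is a prefix of every redex position of t; i.e., every term has at most one maximal (outermost) redex position with respect to the prefix order, and it lies above all other redexes. -/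
open Trm

variable {F : Type}

/-!
An `R_s`-redex is rooted by a stream symbol, so it is a subterm of sort s. In a well-sorted
term, a subterm of sort s can only sit in a stream argument of its parent: data symbols take
no stream arguments. Since every symbol (including `:`) has at most one stream argument, the
positions of the subterms of sort s form a single path from the root, hence are totally
ordered by the prefix order. An outermost redex position can then have no other redex
position strictly above it, so it lies above all of them.
-/

theorem List.eq_of_getElem?_eq_some_of_count_le_one {α : Type*} [BEq α] [LawfulBEq α]
    {l : List α} {a : α} (h : l.count a ≤ 1) {i j : ℕ}
    (hi : l[i]? = some a) (hj : l[j]? = some a) : i = j := by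
  by_contra hne
  wlog hlt : i < j generalizing i j
  · exact this hj hi (Ne.symm hne) (by omega)
  have h_take : a ∈ l.take j := List.mem_of_getElem? (by rwa [List.getElem?_take_of_lt hlt])
  have h_drop : a ∈ l.drop j := List.mem_of_getElem? (i := 0) (by simpa [List.getElem?_drop])
  have h_count := List.count_append (l₁ := l.take j) (l₂ := l.drop j) (a := a)
  rw [List.take_append_drop] at h_count
  have := List.count_pos_iff.2 h_take
  have := List.count_pos_iff.2 h_drop
  omega

theorem WS.exists_sort_of_getElem? {ar : F → List Bool × Bool} {vs : ℕ → Bool} {f : F}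
    {ts : List (Trm F)} {b : Bool} (h : WS ar vs (Trm.app f ts) b) {i : ℕ} {u : Trm F}
    (hu : ts[i]? = some u) : ∃ b', (ar f).1[i]? = some b' ∧ WS ar vs u b' := by
  cases h with
  | app _ _ hlen hargs =>
    have hi : i < (ar f).1.length := hlen ▸ (List.getElem?_eq_some_iff.1 hu).1
    exact ⟨_, List.getElem?_eq_getElem hi, hargs i u _ hu (List.getElem?_eq_getElem hi)⟩

theorem WS.sort_eq_resultSort {ar : F → List Bool × Bool} {vs : ℕ → Bool} {f : F}
    {ts : List (Trm F)} {b : Bool} (h : WS ar vs (Trm.app f ts) b) : b = (ar f).2 := by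
  cases h; rfl

theorem SymOver.of_getElem? {S : Set F} {f : F} {ts : List (Trm F)} (h : SymOver S (Trm.app f ts))
    {i : ℕ} {u : Trm F} (hu : ts[i]? = some u) : SymOver S u := by
  cases h with
  | app _ _ _ hts => exact hts u (List.mem_of_getElem? hu)

theorem SymOver.root_mem {S : Set F} {f : F} {ts : List (Trm F)} (h : SymOver S (Trm.app f ts)) :
    f ∈ S := by
  cases h; assumption

namespace StreamSpec

variable (S : StreamSpec F)

theorem resultSort_eq_true_of_getElem? {h : F} (hh : h ∈ S.Sd ∪ S.Ss ∪ {S.cons}) {i : ℕ}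
    (hi : (S.ar h).1[i]? = some true) : (S.ar h).2 = true := by
  rcases hh with (hd | hs) | rfl
  · simpa using (S.d_sorts h hd).1 true (List.mem_of_getElem? hi)
  · exact S.s_res h hs
  · rw [S.cons_ar]

theorem count_streamArgs_le_one (hone : ∀ f ∈ S.Ss, ((S.ar f).1.count true) ≤ 1) {h : F}
    (hh : h ∈ S.Sd ∪ S.Ss ∪ {S.cons}) : (S.ar h).1.count true ≤ 1 := by
  rcases hh with (hd | hs) | rfl
  · rw [List.count_eq_zero.2 fun hm => by simpa using (S.d_sorts h hd).1 true hm]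
    exact zero_le_one
  · exact hone h hs
  · rw [S.cons_ar]; decide

theorem sort_eq_true_of_subtermAt {f : F} {us : List (Trm F)} (hf : (S.ar f).2 = true) :
    ∀ (p : List ℕ) (t : Trm F) (b : Bool), SymOver (S.Sd ∪ S.Ss ∪ {S.cons}) t →
      WS S.ar S.vs t b → subtermAt t p = some (app f us) → b = true
  | [], t, b, _, hws, hsub => by
    obtain rfl : t = app f us := Option.some_injective _ hsub
    rw [hws.sort_eq_resultSort, hf]
  | i :: p, var _, _, _, _, hsub => by simp [subtermAt] at hsub
  | i :: p, app g ts, b, hsym, hws, hsub => by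
    obtain ⟨u, hu, hup⟩ := Option.bind_eq_some_iff.1 hsub
    obtain ⟨bi, hbi, hwu⟩ := hws.exists_sort_of_getElem? hu
    obtain rfl := sort_eq_true_of_subtermAt hf p u bi (hsym.of_getElem? hu) hwu hup
    rw [hws.sort_eq_resultSort]
    exact S.resultSort_eq_true_of_getElem? hsym.root_mem hbi

theorem prefix_or_prefix_of_subtermAt (hone : ∀ f ∈ S.Ss, ((S.ar f).1.count true) ≤ 1)
    {f g : F} {us ws : List (Trm F)} (hf : (S.ar f).2 = true) (hg : (S.ar g).2 = true) :
    ∀ (p q : List ℕ) (t : Trm F) (b : Bool), SymOver (S.Sd ∪ S.Ss ∪ {S.cons}) t →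
      WS S.ar S.vs t b → subtermAt t p = some (app f us) → subtermAt t q = some (app g ws) →
      p <+: q ∨ q <+: p
  | [], _, _, _, _, _, _, _ => Or.inl List.nil_prefix
  | _ :: _, [], _, _, _, _, _, _ => Or.inr List.nil_prefix
  | _ :: _, _ :: _, var _, _, _, _, hp, _ => by simp [subtermAt] at hp
  | i :: p, j :: q, app h ts, _, hsym, hws, hp, hq => by
    obtain ⟨u, hu, hup⟩ := Option.bind_eq_some_iff.1 hp
    obtain ⟨v, hv, hvq⟩ := Option.bind_eq_some_iff.1 hq
    obtain ⟨bi, hbi, hwu⟩ := hws.exists_sort_of_getElem? hu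
    obtain ⟨bj, hbj, hwv⟩ := hws.exists_sort_of_getElem? hv
    obtain rfl := S.sort_eq_true_of_subtermAt hf p u bi (hsym.of_getElem? hu) hwu hup
    obtain rfl := S.sort_eq_true_of_subtermAt hg q v bj (hsym.of_getElem? hv) hwv hvq
    obtain rfl : i = j := List.eq_of_getElem?_eq_some_of_count_le_one
      (S.count_streamArgs_le_one hone hsym.root_mem) hbi hbj
    obtain rfl : u = v := Option.some_injective _ (hu.symm.trans hv)
    simpa only [List.cons_prefix_cons, true_and] using
      prefix_or_prefix_of_subtermAt hone hf hg p q u true (hsym.of_getElem? hu) hwu hup hvq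

theorem exists_subtermAt_of_hasRedexAt {t : Trm F} {p : List ℕ} (h : HasRedexAt S.Rs t p) :
    ∃ f us, subtermAt t p = some (app f us) ∧ (S.ar f).2 = true := by
  obtain ⟨s, hs, l, r, σ, hlr, rfl⟩ := h
  obtain ⟨f, args, hf, rfl, -⟩ := S.lhs_shape l r hlr
  rw [subst] at hs
  exact ⟨f, _, hs, S.s_res f hf⟩

theorem prefix_or_prefix_of_hasRedexAt (hone : ∀ f ∈ S.Ss, ((S.ar f).1.count true) ≤ 1)
    {t : Trm F} (ht : S.GroundStream t) {p q : List ℕ} (hp : HasRedexAt S.Rs t p)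
    (hq : HasRedexAt S.Rs t q) : p <+: q ∨ q <+: p := by
  obtain ⟨f, us, hpf, hf⟩ := S.exists_subtermAt_of_hasRedexAt hp
  obtain ⟨g, ws, hqg, hg⟩ := S.exists_subtermAt_of_hasRedexAt hq
  exact S.prefix_or_prefix_of_subtermAt hone hf hg p q t true ht.2.1 ht.2.2 hpf hqg

end StreamSpec

theorem outermost_redex_above_all_general {F : Type} (S : StreamSpec F)
    (hone : ∀ f ∈ S.Ss, ((S.ar f).1.count true) ≤ 1)
    (t : Trm F) (hg : S.GroundStream t)
    (p : List ℕ) (hp : HasRedexAt S.Rs t p)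
    (hout : ∀ q, StrictPref q p → ¬ HasRedexAt S.Rs t q) :
    ∀ q, HasRedexAt S.Rs t q → p <+: q := by
  intro q hq
  rcases S.prefix_or_prefix_of_hasRedexAt hone hg hp hq with hpq | hqp
  · exact hpq
  · by_cases hqp' : q = p
    · exact hqp' ▸ List.prefix_refl q
    · exact absurd hq (hout q ⟨hqp, hqp'⟩)

/-- with R_d = ∅ and at most one stream argument per stream symbol,
an outermost redex position of a ground stream term is a prefix of every redex
position of that term. -/
theorem outermost_redex_above_all {F : Type} (S : StreamSpec F)
    (hRd : S.Rd = ∅)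
    (hone : ∀ f ∈ S.Ss, ((S.ar f).1.count true) ≤ 1)
    (t : Trm F) (hg : S.GroundStream t)
    (p : List ℕ) (hp : HasRedexAt S.Rs t p)
    (hout : ∀ q, StrictPref q p → ¬ HasRedexAt S.Rs t q) :
    ∀ q, HasRedexAt S.Rs t q → p <+: q :=
  outermost_redex_above_all_general S hone t hg p hp hout
end
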